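/- arXiv:1907.01073 — 4 statements merged into one kernel-verified Lean document; each statement's English description precedes it below -/
import Mathlib

section
/- Let 𝓔 be a 2-partition of a finite set E and let F₀ ∈ 𝓔 be a block such that F₀ ∩ F ≠ ∅ for every block F ∈ 𝓔 with F ≠ F₀. Then ∑_{F ∈ 𝓔} (|F| - 1) = (|F₀| - 1) + |F₀| · (|E| - |F₀|). (This identity expresses the integral splitting of the characteristic polynomial of a supersolvable rank-3 simple matroid, whose roots are 1, |F₀| - 1 and |E| - |F₀|.) -/
/-- A 2-partition of a finite set `E`: a collection `𝓔` of subsets of `E` such that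
every block has at least 2 elements and every pair of distinct elements of `E`
is contained in exactly one block. -/
def IsTwoPartition {α : Type*} [DecidableEq α] (E : Finset α) (𝓔 : Finset (Finset α)) : Prop :=
  (∀ F ∈ 𝓔, F ⊆ E ∧ 2 ≤ F.card) ∧
    (∀ a ∈ E, ∀ b ∈ E, a ≠ b → ∃! F, F ∈ 𝓔 ∧ a ∈ F ∧ b ∈ F)

/-- If a block `F₀` of a 2-partition `𝓔` of `E` meets every other
block nontrivially, then `∑_{F ∈ 𝓔} (|F| - 1) = (|F₀| - 1) + |F₀| · (|E| - |F₀|)`. -/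
theorem twoPartition_supersolvable_sum {α : Type*} [DecidableEq α]
    (E : Finset α) (𝓔 : Finset (Finset α)) (h : IsTwoPartition E 𝓔)
    (F₀ : Finset α) (hF₀ : F₀ ∈ 𝓔)
    (hmeets : ∀ F ∈ 𝓔, F ≠ F₀ → (F₀ ∩ F).Nonempty) :
    ∑ F ∈ 𝓔, (F.card - 1) = (F₀.card - 1) + F₀.card * (E.card - F₀.card) := by
  obtain ⟨hsub, huniq⟩ := h
  have hF₀E : F₀ ⊆ E := (hsub F₀ hF₀).1
  -- each other block meets F₀ in exactly one point
  have key : ∀ F ∈ 𝓔, F ≠ F₀ → (F ∩ F₀).card = 1 := by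
    intro F hF hne
    obtain ⟨a, ha⟩ := hmeets F hF hne
    rw [Finset.mem_inter] at ha
    refine Finset.card_eq_one.mpr ⟨a, ?_⟩
    ext b
    simp only [Finset.mem_inter, Finset.mem_singleton]
    constructor
    · intro hb
      by_contra hba
      have haE : a ∈ E := hF₀E ha.1
      have hbE : b ∈ E := hF₀E hb.2
      obtain ⟨G, _, hGu⟩ := huniq a haE b hbE (Ne.symm hba)
      exact hne ((hGu F ⟨hF, ha.2, hb.1⟩).trans (hGu F₀ ⟨hF₀, ha.1, hb.2⟩).symm)
    · rintro rfl; exact ⟨ha.2, ha.1⟩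
  -- cover the pairs
  have cover : F₀ ×ˢ (E \ F₀) = (𝓔.erase F₀).biUnion (fun F => (F ∩ F₀) ×ˢ (F \ F₀)) := by
    ext ⟨a, b⟩
    simp only [Finset.mem_product, Finset.mem_biUnion, Finset.mem_erase, Finset.mem_inter,
      Finset.mem_sdiff]
    constructor
    · rintro ⟨ha, hbE, hb⟩
      have hab : a ≠ b := ne_of_mem_of_not_mem ha hb
      obtain ⟨G, ⟨hG, haG, hbG⟩, hGu⟩ := huniq a (hF₀E ha) b hbE hab
      have hGne : G ≠ F₀ := fun e => hb (e ▸ hbG)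
      exact ⟨G, ⟨hGne, hG⟩, ⟨haG, ha⟩, hbG, hb⟩
    · rintro ⟨F, ⟨hne, hF⟩, ⟨haF, ha⟩, hbF, hb⟩
      exact ⟨ha, (hsub F hF).1 hbF, hb⟩
  have disj : ∀ F ∈ (𝓔.erase F₀), ∀ G ∈ (𝓔.erase F₀), F ≠ G →
      Disjoint ((F ∩ F₀) ×ˢ (F \ F₀)) ((G ∩ F₀) ×ˢ (G \ F₀)) := by
    intro F hF G hG hFG
    rw [Finset.disjoint_left]
    rintro ⟨a, b⟩ hp hq
    simp only [Finset.mem_product, Finset.mem_inter, Finset.mem_sdiff] at hp hq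
    have hab : a ≠ b := fun e => hp.2.2 (e ▸ hp.1.2)
    rw [Finset.mem_erase] at hF hG
    obtain ⟨H, _, hHu⟩ := huniq a (hF₀E hp.1.2) b ((hsub F hF.2).1 hp.2.1) hab
    exact hFG ((hHu F ⟨hF.2, hp.1.1, hp.2.1⟩).trans (hHu G ⟨hG.2, hq.1.1, hq.2.1⟩).symm)
  have main : ∑ F ∈ 𝓔.erase F₀, (F.card - 1) = F₀.card * (E.card - F₀.card) := by
    have hc := congrArg Finset.card cover
    rw [Finset.card_product, Finset.card_biUnion disj, Finset.card_sdiff_of_subset hF₀E] at hc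
    rw [hc]
    refine Finset.sum_congr rfl fun F hF => ?_
    rw [Finset.mem_erase] at hF
    have h1 : (F ∩ F₀).card = 1 := key F hF.2 hF.1
    have h2 : (F \ F₀).card = F.card - 1 := by
      rw [← Finset.sdiff_inter_self_left F F₀, Finset.card_sdiff_of_subset Finset.inter_subset_left, h1]
    rw [Finset.card_product, h1, h2, one_mul]
  rw [← Finset.add_sum_erase 𝓔 _ hF₀, main]
end

section
/- There is no 2-partition 𝓔 of a 14-element set E having exactly 21 blocks of cardinality 3, exactly 3 blocks of cardinality 4, exactly 1 block of cardinality 5, and no blocks of any other cardinality. (Equivalently: there is no simple rank-3 matroid of size 14 with multiplicity vector (m₃, m₄, m₅) = (21, 3, 1).) -/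
/-- There is no 2-partition of a 14-element set with exactly 21
blocks of cardinality 3, exactly 3 blocks of cardinality 4, exactly 1 block of
cardinality 5, and no blocks of any other cardinality (i.e. no simple rank-3
matroid of size 14 with multiplicity vector `(m₃, m₄, m₅) = (21, 3, 1)`). -/
theorem no_twoPartition_21_3_1 {α : Type*} [DecidableEq α]
    (E : Finset α) (hE : E.card = 14) (𝓔 : Finset (Finset α))
    (h : IsTwoPartition E 𝓔) :
    ¬ ((𝓔.filter (fun F => F.card = 3)).card = 21 ∧
       (𝓔.filter (fun F => F.card = 4)).card = 3 ∧
       (𝓔.filter (fun F => F.card = 5)).card = 1 ∧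
       ∀ F ∈ 𝓔, F.card = 3 ∨ F.card = 4 ∨ F.card = 5) := by
  rintro ⟨h3, h4, h5, hall⟩
  obtain ⟨hsub, huniq⟩ := h
  -- every point lies in at least one block of cardinality 4
  have key : ∀ x ∈ E, 1 ≤ ((𝓔.filter (fun F => F.card = 4)).filter (fun F => x ∈ F)).card := by
    intro x hx
    set S := 𝓔.filter (fun F => x ∈ F) with hSdef
    have hmemS : ∀ F, F ∈ S ↔ F ∈ 𝓔 ∧ x ∈ F := by
      intro F; simp [hSdef]
    have hdisj : ∀ F ∈ S, ∀ G ∈ S, F ≠ G → Disjoint (F.erase x) (G.erase x) := by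
      intro F hF G hG hFG
      rw [hmemS] at hF hG
      rw [Finset.disjoint_left]
      intro b hbF hbG
      have hbx : b ≠ x := Finset.ne_of_mem_erase hbF
      have hbF' : b ∈ F := Finset.mem_of_mem_erase hbF
      have hbG' : b ∈ G := Finset.mem_of_mem_erase hbG
      have hbE : b ∈ E := (hsub F hF.1).1 hbF'
      obtain ⟨U, hU, hUuniq⟩ := huniq x hx b hbE (Ne.symm hbx)
      exact hFG ((hUuniq F ⟨hF.1, hF.2, hbF'⟩).trans (hUuniq G ⟨hG.1, hG.2, hbG'⟩).symm)
    have hcover : E.erase x = S.biUnion (fun F => F.erase x) := by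
      ext b
      simp only [Finset.mem_biUnion, Finset.mem_erase, hSdef, Finset.mem_filter]
      constructor
      · rintro ⟨hbx, hbE⟩
        obtain ⟨F, ⟨hF𝓔, hxF, hbF⟩, -⟩ := huniq x hx b hbE (Ne.symm hbx)
        exact ⟨F, ⟨hF𝓔, hxF⟩, hbx, hbF⟩
      · rintro ⟨F, ⟨hF𝓔, hxF⟩, hbx, hbF⟩
        exact ⟨hbx, (hsub F hF𝓔).1 hbF⟩
    have hsum : ∑ F ∈ S, (F.card - 1) = 13 := by
      have h1 : (E.erase x).card = 13 := by
        rw [Finset.card_erase_of_mem hx, hE]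
      rw [hcover, Finset.card_biUnion hdisj] at h1
      rw [← h1]
      apply Finset.sum_congr rfl
      intro F hF
      rw [hmemS] at hF
      rw [Finset.card_erase_of_mem hF.2]
    by_contra hcon
    push_neg at hcon
    interval_cases hq : ((𝓔.filter (fun F => F.card = 4)).filter (fun F => x ∈ F)).card
    have hnone : ∀ F ∈ S, F.card ≠ 4 := by
      intro F hF hc4
      rw [hmemS] at hF
      have : F ∈ (𝓔.filter (fun F => F.card = 4)).filter (fun F => x ∈ F) := by
        simp [Finset.mem_filter, hF.1, hF.2, hc4]
      rw [Finset.card_eq_zero] at hq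
      simp [hq] at this
    have heven : Even (∑ F ∈ S, (F.card - 1)) := by
      apply Finset.even_sum
      intro F hF
      have hF' := hF
      rw [hmemS] at hF'
      rcases hall F hF'.1 with hc | hc | hc
      · rw [hc]; decide
      · exact absurd hc (hnone F hF)
      · rw [hc]; decide
    rw [hsum] at heven
    exact (by decide : ¬ Even 13) heven
  -- double counting incidences with blocks of cardinality 4
  have count : ∑ x ∈ E, ((𝓔.filter (fun F => F.card = 4)).filter (fun F => x ∈ F)).card = 12 := by
    have hrw : ∀ x, ((𝓔.filter (fun F => F.card = 4)).filter (fun F => x ∈ F)).card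
        = ∑ F ∈ 𝓔.filter (fun F => F.card = 4), if x ∈ F then 1 else 0 := by
      intro x
      rw [Finset.card_filter]
    simp_rw [hrw]
    rw [Finset.sum_comm]
    have : ∀ F ∈ 𝓔.filter (fun F => F.card = 4),
        (∑ x ∈ E, if x ∈ F then 1 else 0) = 4 := by
      intro F hF
      rw [Finset.mem_filter] at hF
      rw [← Finset.card_filter]
      have : E.filter (fun x => x ∈ F) = F := by
        rw [Finset.filter_mem_eq_inter, Finset.inter_eq_right]
        exact (hsub F hF.1).1
      rw [this, hF.2]
    rw [Finset.sum_congr rfl this, Finset.sum_const, h4]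
    rfl
  have hle : (14 : ℕ) ≤ 12 := by
    calc (14 : ℕ) = E.card * 1 := by rw [hE]
    _ ≤ ∑ x ∈ E, ((𝓔.filter (fun F => F.card = 4)).filter (fun F => x ∈ F)).card := by
        rw [← smul_eq_mul]
        exact Finset.card_nsmul_le_sum E _ 1 key
    _ = 12 := count
  omega
end

section
/- There is no 2-partition 𝓔 of a 14-element set E having exactly 1 block of cardinality 2, exactly 23 blocks of cardinality 3, exactly 1 block of cardinality 4, exactly 1 block of cardinality 6, and no blocks of any other cardinality. (Equivalently: there is no simple rank-3 matroid of size 14 with multiplicity vector (m₂, m₃, m₄, m₅, m₆) = (1, 23, 1, 0, 1).) -/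
/-- There is no 2-partition of a 14-element set with exactly 1
block of cardinality 2, exactly 23 blocks of cardinality 3, exactly 1 block of
cardinality 4, exactly 1 block of cardinality 6, and no blocks of any other
cardinality (i.e. no simple rank-3 matroid of size 14 with multiplicity vector
`(m₂, m₃, m₄, m₅, m₆) = (1, 23, 1, 0, 1)`). -/
theorem no_twoPartition_1_23_1_0_1 {α : Type*} [DecidableEq α]
    (E : Finset α) (hE : E.card = 14) (𝓔 : Finset (Finset α))
    (h : IsTwoPartition E 𝓔) :
    ¬ ((𝓔.filter (fun F => F.card = 2)).card = 1 ∧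
       (𝓔.filter (fun F => F.card = 3)).card = 23 ∧
       (𝓔.filter (fun F => F.card = 4)).card = 1 ∧
       (𝓔.filter (fun F => F.card = 5)).card = 0 ∧
       (𝓔.filter (fun F => F.card = 6)).card = 1 ∧
       ∀ F ∈ 𝓔, F.card = 2 ∨ F.card = 3 ∨ F.card = 4 ∨ F.card = 6) := by
  rintro ⟨h2, _h3, h4, _h5, h6, hall⟩
  obtain ⟨hcov, huniq⟩ := h
  obtain ⟨F2, hF2⟩ := Finset.card_eq_one.mp h2
  obtain ⟨F4, hF4⟩ := Finset.card_eq_one.mp h4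
  obtain ⟨F6, hF6⟩ := Finset.card_eq_one.mp h6
  have hF2m : F2 ∈ 𝓔.filter (fun F => F.card = 2) := hF2 ▸ Finset.mem_singleton_self F2
  have hF4m : F4 ∈ 𝓔.filter (fun F => F.card = 4) := hF4 ▸ Finset.mem_singleton_self F4
  have hF6m : F6 ∈ 𝓔.filter (fun F => F.card = 6) := hF6 ▸ Finset.mem_singleton_self F6
  have hF2c := (Finset.mem_filter.mp hF2m).2
  have hF4c := (Finset.mem_filter.mp hF4m).2
  have hF6c := (Finset.mem_filter.mp hF6m).2
  -- every point of E lies in F2 ∪ F4 ∪ F6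
  have key : ∀ x ∈ E, x ∈ F2 ∨ x ∈ F4 ∨ x ∈ F6 := by
    intro x hx
    by_contra hc
    push_neg at hc
    obtain ⟨hx2, hx4, hx6⟩ := hc
    set S := 𝓔.filter (fun F => x ∈ F) with hS
    have hdisj : ∀ F ∈ S, ∀ G ∈ S, F ≠ G → Disjoint (F.erase x) (G.erase x) := by
      intro F hF G hG hne
      rw [Finset.disjoint_left]
      intro y hyF hyG
      have hyFx := Finset.mem_erase.mp hyF
      have hyGx := Finset.mem_erase.mp hyG
      have hFE := Finset.mem_filter.mp hF
      have hGE := Finset.mem_filter.mp hG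
      have hyE : y ∈ E := (hcov F hFE.1).1 hyFx.2
      obtain ⟨U, _, hU⟩ := huniq x hx y hyE (Ne.symm hyFx.1)
      exact hne ((hU F ⟨hFE.1, hFE.2, hyFx.2⟩).trans (hU G ⟨hGE.1, hGE.2, hyGx.2⟩).symm)
    have hbU : S.biUnion (fun F => F.erase x) = E.erase x := by
      ext y
      simp only [Finset.mem_biUnion, Finset.mem_erase]
      constructor
      · rintro ⟨F, hF, hyx, hyF⟩
        have hFE := Finset.mem_filter.mp hF
        exact ⟨hyx, (hcov F hFE.1).1 hyF⟩
      · rintro ⟨hyx, hyE⟩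
        obtain ⟨U, ⟨hU𝓔, hUx, hUy⟩, _⟩ := huniq x hx y hyE (Ne.symm hyx)
        exact ⟨U, Finset.mem_filter.mpr ⟨hU𝓔, hUx⟩, hyx, hUy⟩
    have hsum : ∑ F ∈ S, (F.erase x).card = 13 := by
      rw [← Finset.card_biUnion hdisj, hbU, Finset.card_erase_of_mem hx, hE]
    have hcard2 : ∀ F ∈ S, (F.erase x).card = 2 := by
      intro F hF
      have hFE := Finset.mem_filter.mp hF
      have hc2 : F.card ≠ 2 := fun hh => hx2
        ((Finset.mem_singleton.mp (hF2 ▸ Finset.mem_filter.mpr ⟨hFE.1, hh⟩)) ▸ hFE.2)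
      have hc4 : F.card ≠ 4 := fun hh => hx4
        ((Finset.mem_singleton.mp (hF4 ▸ Finset.mem_filter.mpr ⟨hFE.1, hh⟩)) ▸ hFE.2)
      have hc6 : F.card ≠ 6 := fun hh => hx6
        ((Finset.mem_singleton.mp (hF6 ▸ Finset.mem_filter.mpr ⟨hFE.1, hh⟩)) ▸ hFE.2)
      have h3 : F.card = 3 := by rcases hall F hFE.1 with hh|hh|hh|hh <;> simp_all
      rw [Finset.card_erase_of_mem hFE.2, h3]
    rw [Finset.sum_congr rfl hcard2, Finset.sum_const, smul_eq_mul] at hsum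
    omega
  have hsub : E ⊆ F2 ∪ F4 ∪ F6 := by
    intro x hx
    rcases key x hx with hh|hh|hh <;> simp [hh]
  have hle : E.card ≤ (F2 ∪ F4 ∪ F6).card := Finset.card_le_card hsub
  have h1 : (F2 ∪ F4 ∪ F6).card ≤ (F2 ∪ F4).card + F6.card := Finset.card_union_le _ _
  have h2' : (F2 ∪ F4).card ≤ F2.card + F4.card := Finset.card_union_le _ _
  omega
end

section
/- Let F be an algebraically closed field whose characteristic is neither 2 nor 5. Then there exists a ∈ F with 2a² - 2a + 1 = 0 and (3a - 1)(a + 1) ≠ 0. (Consequently, the divisionally free but not inductively free rank-3 matroid with 14 atoms is representable in every characteristic distinct from 2 and 5.) -/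
/-!
The roots of `2a² - 2a + 1` are `a = (1 ± i)/2`, which exist as soon as `2 ≠ 0` (the
discriminant `-4` is a square in an algebraically closed field). On such a root,
`2(3a - 1)(a + 1) = 5(2a - 1)` and `(2a - 1)² = -1`, so `(3a - 1)(a + 1)` can only vanish
when `5 = 0`.
-/

theorem exists_two_mul_sq_sub_two_mul_add_one_eq_zero {F : Type*} [Field F] [IsAlgClosed F]
    (h2 : (2 : F) ≠ 0) : ∃ a : F, 2 * a ^ 2 - 2 * a + 1 = 0 := by
  have : NeZero (2 : F) := ⟨h2⟩
  obtain ⟨a, ha⟩ :=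
    exists_quadratic_eq_zero (b := -2) (c := 1) h2 (IsAlgClosed.exists_eq_mul_self _)
  exact ⟨a, by linear_combination ha⟩

theorem mul_ne_zero_of_two_mul_sq_sub_two_mul_add_one_eq_zero {R : Type*} [CommRing R]
    [NoZeroDivisors R] (h5 : (5 : R) ≠ 0) {a : R} (ha : 2 * a ^ 2 - 2 * a + 1 = 0) :
    (3 * a - 1) * (a + 1) ≠ 0 := by
  intro h
  have h5a : (5 : R) * (2 * a - 1) = 0 := by linear_combination 2 * h - 3 * ha
  have h2a : 2 * a - 1 = 0 := (mul_eq_zero.mp h5a).resolve_left h5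
  exact h5 (by linear_combination 10 * ha - 5 * (2 * a - 1) * h2a)

/-- Over any algebraically closed field of characteristic neither
2 nor 5 there exists `a` with `2a² - 2a + 1 = 0` and `(3a - 1)(a + 1) ≠ 0`. -/
theorem exists_root_with_nonvanishing {F : Type*} [Field F] [IsAlgClosed F]
    (h2 : ringChar F ≠ 2) (h5 : ringChar F ≠ 5) :
    ∃ a : F, 2 * a ^ 2 - 2 * a + 1 = 0 ∧ (3 * a - 1) * (a + 1) ≠ 0 := by
  have five_ne_zero : (5 : F) ≠ 0 := by
    exact_mod_cast CharP.cast_ne_zero_of_ne_of_prime F Nat.prime_five h5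
  obtain ⟨a, ha⟩ := exists_two_mul_sq_sub_two_mul_add_one_eq_zero (Ring.two_ne_zero h2)
  exact ⟨a, ha, mul_ne_zero_of_two_mul_sq_sub_two_mul_add_one_eq_zero five_ne_zero ha⟩
end
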